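/- arXiv:2408.10027 — 3 statements merged into one kernel-verified Lean document; each statement's English description precedes it below -/
import Mathlib

section
/- In any terminal configuration of the binary-representation protocol reachable from the initial configuration with n ≥ 1 agents all in state 2^0, for each i there is at most one agent in state 2^i, and the set of exponents i with exactly one agent in state 2^i is exactly the set of positions of 1-bits in the binary representation of n. -/
/-- A step of the binary-representation population protocol (merge or identity). -/
def BStep (C C' : Multiset ℕ) : Prop :=
  (∃ i : ℕ, ({2^i, 2^i} : Multiset ℕ) ≤ C ∧
    C' = C - {2^i, 2^i} + {2^(i+1), 0}) ∨ C' = C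

/-- A non-trivial transition of the binary-representation protocol. -/
def NTStep (C C' : Multiset ℕ) : Prop :=
  ∃ i : ℕ, ({2^i, 2^i} : Multiset ℕ) ≤ C ∧ C' = C - {2^i, 2^i} + {2^(i+1), 0}

/-- Bits of a sum of distinct powers of two. -/
lemma bit_sum_pow (S : Finset ℕ) (j : ℕ) :
    (∑ i ∈ S, 2^i).testBit j = true ↔ j ∈ S := by
  induction S using Finset.induction_on_max with
  | empty => simp
  | insert a S ha ih =>
    have hna : a ∉ S := fun h => absurd (ha a h) (lt_irrefl a)
    have hS : (∑ i ∈ S, 2^i) < 2^a := by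
      calc (∑ i ∈ S, 2^i) ≤ ∑ i ∈ Finset.range a, 2^i :=
            Finset.sum_le_sum_of_subset (fun x hx => Finset.mem_range.mpr (ha x hx))
        _ < 2^a := by
            have h1 : ∑ i ∈ Finset.range a, 2^i = 2^a - 1 := by
              simpa using Nat.geomSum_eq (le_refl 2) a
            have h2 : 1 ≤ 2^a := Nat.one_le_two_pow
            omega
    rw [Finset.sum_insert hna]
    rcases lt_trichotomy j a with h | rfl | h
    · rw [Nat.testBit_two_pow_add_gt h, ih]
      simp only [Finset.mem_insert]
      exact ⟨fun hj => Or.inr hj, fun hj => hj.resolve_left (fun e => absurd e h.ne)⟩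
    · rw [Nat.testBit_two_pow_add_eq, Nat.testBit_lt_two_pow hS]
      simp
    · have hlt : 2^a + ∑ i ∈ S, 2^i < 2^j := by
        have : 2^(a+1) ≤ 2^j := Nat.pow_le_pow_right (by norm_num) h
        rw [pow_succ] at this; omega
      rw [Nat.testBit_lt_two_pow hlt]
      simp only [Finset.mem_insert, Bool.false_eq_true, false_iff]
      rintro (rfl | hj)
      · exact absurd h (lt_irrefl j)
      · exact absurd (ha j hj) (Nat.lt_asymm h)

/-- The sum and shape invariants of the protocol. -/
lemma bstep_invariant (n : ℕ) {C : Multiset ℕ}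
    (hreach : Relation.ReflTransGen BStep (Multiset.replicate n (2^0)) C) :
    C.sum = n ∧ ∀ x ∈ C, x = 0 ∨ ∃ i, x = 2^i := by
  induction hreach with
  | refl =>
    refine ⟨by simp, fun x hx => Or.inr ⟨0, Multiset.eq_of_mem_replicate hx⟩⟩
  | tail _ hstep ih =>
    rename_i B C' _
    rcases hstep with ⟨i, hle, rfl⟩ | rfl
    · obtain ⟨E, rfl⟩ := Multiset.le_iff_exists_add.mp hle
      rw [add_tsub_cancel_left]
      constructor
      · have h1 : ({2^i, 2^i} : Multiset ℕ).sum = 2^i + 2^i := by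
          simp [Multiset.insert_eq_cons]
        have h2 : ({2^(i+1), 0} : Multiset ℕ).sum = 2^(i+1) := by
          simp [Multiset.insert_eq_cons]
        have := ih.1
        rw [Multiset.sum_add, h1] at this
        rw [Multiset.sum_add, h2, pow_succ]
        omega
      · intro x hx
        rw [Multiset.mem_add] at hx
        rcases hx with hx | hx
        · exact ih.2 x (Multiset.mem_add.mpr (Or.inr hx))
        · simp only [Multiset.insert_eq_cons, Multiset.mem_cons, Multiset.mem_singleton] at hx
          rcases hx with rfl | rfl
          · exact Or.inr ⟨i + 1, rfl⟩
          · exact Or.inl rfl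
    · exact ih

/-- In any terminal configuration reachable from `n ≥ 1` agents in state `2^0`,
each power `2^i` is held by at most one agent, and `2^i` is held by exactly one
agent iff bit `i` of the binary representation of `n` is set. -/
theorem binary_protocol_terminal (n : ℕ) (hn : 1 ≤ n) (C : Multiset ℕ)
    (hreach : Relation.ReflTransGen BStep (Multiset.replicate n (2^0)) C)
    (hterm : ¬ ∃ C', NTStep C C') :
    ∀ i : ℕ, C.count (2^i) ≤ 1 ∧ (C.count (2^i) = 1 ↔ n.testBit i) := by
  obtain ⟨hsum, hshape⟩ := bstep_invariant n hreach
  -- each power appears at most once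
  have hcount : ∀ i : ℕ, C.count (2^i) ≤ 1 := by
    intro i
    by_contra h
    push_neg at h
    have hle : ({2^i, 2^i} : Multiset ℕ) ≤ C := by
      have : Multiset.replicate 2 (2^i) ≤ C :=
        (Multiset.le_count_iff_replicate_le).mp h
      simpa [Multiset.insert_eq_cons, Multiset.replicate_succ] using this
    exact hterm ⟨_, i, hle, rfl⟩
  -- the set of nonzero elements
  set S : Finset ℕ := C.toFinset.filter (fun x => x ≠ 0) with hSdef
  have hScount : ∀ a ∈ S, C.count a = 1 := by
    intro a ha
    rw [hSdef, Finset.mem_filter, Multiset.mem_toFinset] at ha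
    rcases hshape a ha.1 with rfl | ⟨i, rfl⟩
    · exact absurd rfl ha.2
    · have h1 : 1 ≤ C.count (2^i) := Multiset.one_le_count_iff_mem.mpr ha.1
      exact le_antisymm (hcount i) h1
  have hsumS : ∑ a ∈ S, a = n := by
    have h0 : C.sum = ∑ a ∈ C.toFinset, C.count a • a := by
      conv_lhs => rw [← Multiset.toFinset_sum_count_nsmul_eq C]
      rw [Multiset.sum_sum]
      apply Finset.sum_congr rfl
      intro a _
      simp [Multiset.nsmul_singleton, Multiset.sum_replicate, smul_eq_mul]
    calc ∑ a ∈ S, a = ∑ a ∈ S, C.count a • a := by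
          refine Finset.sum_congr rfl (fun a ha => ?_)
          rw [hScount a ha, one_smul]
      _ = ∑ a ∈ C.toFinset, C.count a • a := by
          refine Finset.sum_subset (Finset.filter_subset _ _) (fun a haT haS => ?_)
          have ha0 : a = 0 := by
            by_contra h
            exact haS (Finset.mem_filter.mpr ⟨haT, h⟩)
          simp [ha0]
      _ = C.sum := h0.symm
      _ = n := hsum
  have hSpow : ∀ a ∈ S, ∃ k, a = 2^k := by
    intro a ha
    obtain ⟨haC, ha0⟩ := Finset.mem_filter.mp ha
    rcases hshape a (Multiset.mem_toFinset.mp haC) with rfl | ⟨k, rfl⟩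
    · exact absurd rfl ha0
    · exact ⟨k, rfl⟩
  have hpow_mem : ∀ i : ℕ, C.count (2^i) = 1 ↔ 2^i ∈ S := by
    intro i
    constructor
    · intro h
      rw [hSdef, Finset.mem_filter, Multiset.mem_toFinset]
      exact ⟨Multiset.count_pos.mp (by omega), pow_ne_zero i two_ne_zero⟩
    · intro h
      exact hScount _ h
  set T : Finset ℕ := S.image (fun a => Nat.log 2 a) with hTdef
  have hmemT : ∀ j : ℕ, j ∈ T ↔ 2^j ∈ S := by
    intro j
    rw [hTdef, Finset.mem_image]
    constructor
    · rintro ⟨a, ha, rfl⟩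
      obtain ⟨k, rfl⟩ := hSpow a ha
      rwa [Nat.log_pow one_lt_two]
    · intro h
      exact ⟨2^j, h, Nat.log_pow one_lt_two j⟩
  have hsumT : ∑ i ∈ T, 2^i = n := by
    rw [hTdef, Finset.sum_image ?_]
    · rw [← hsumS]
      refine Finset.sum_congr rfl (fun a ha => ?_)
      obtain ⟨k, rfl⟩ := hSpow a ha
      rw [Nat.log_pow one_lt_two]
    · intro a ha b hb hab
      obtain ⟨k, rfl⟩ := hSpow a ha
      obtain ⟨m, rfl⟩ := hSpow b hb
      beta_reduce at hab
      rw [Nat.log_pow one_lt_two, Nat.log_pow one_lt_two] at hab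
      rw [hab]
  intro i
  refine ⟨hcount i, ?_⟩
  rw [hpow_mem i, ← hmemT i, ← hsumT]
  exact (bit_sum_pow T i).symm
end

section
/- For the binary-representation protocol started with n ≥ 2 agents in state 2^0, the set of states coverable from the initial configuration is exactly {0} ∪ {2^i : 0 ≤ i ≤ ⌊log₂ n⌋}, and hence the state complexity is S(n) = ⌊log₂ n⌋ + 2. -/
/-- The set of states coverable from the initial configuration of `n` agents in `2^0`. -/
def Coverable (n : ℕ) : Set ℕ :=
  {q | ∃ C : Multiset ℕ,
    Relation.ReflTransGen BStep (Multiset.replicate n (2^0)) C ∧ q ∈ C}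

lemma bstep_merge (k : ℕ) (X : Multiset ℕ) :
    BStep (({2^k, 2^k} : Multiset ℕ) + X) (X + {2^(k+1), 0}) := by
  left
  exact ⟨k, Multiset.le_add_right _ _, by rw [add_tsub_cancel_left]⟩

lemma reach_merge (k : ℕ) (R : Multiset ℕ) :
    Relation.ReflTransGen BStep (Multiset.replicate (2^k) 1 + R)
      ({2^k} + Multiset.replicate (2^k - 1) 0 + R) := by
  induction k generalizing R with
  | zero =>
    have : Multiset.replicate (2^0) 1 + R = {2^0} + Multiset.replicate (2^0 - 1) 0 + R := by simp [Multiset.replicate_one]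
    rw [this]
  | succ k ih =>
    have hpos : 1 ≤ 2^k := Nat.one_le_two_pow
    have h1 : Multiset.replicate (2^(k+1)) 1 + R
        = Multiset.replicate (2^k) 1 + (Multiset.replicate (2^k) 1 + R) := by
      rw [← add_assoc, ← Multiset.replicate_add]
      congr 2
      omega
    have step1 := ih (Multiset.replicate (2^k) 1 + R)
    have step2 := ih ({2^k} + Multiset.replicate (2^k - 1) 0 + R)
    have h2 : {2^k} + Multiset.replicate (2^k - 1) 0 + (Multiset.replicate (2^k) 1 + R)
        = Multiset.replicate (2^k) 1 + ({2^k} + Multiset.replicate (2^k - 1) 0 + R) := by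
      abel
    have step3 : BStep
        ({2^k} + Multiset.replicate (2^k - 1) 0 + ({2^k} + Multiset.replicate (2^k - 1) 0 + R))
        ({2^(k+1)} + Multiset.replicate (2^(k+1) - 1) 0 + R) := by
      have e1 : {2^k} + Multiset.replicate (2^k - 1) 0 + ({2^k} + Multiset.replicate (2^k - 1) 0 + R)
          = ({2^k, 2^k} : Multiset ℕ) + (Multiset.replicate (2^k - 1) 0 + Multiset.replicate (2^k - 1) 0 + R) := by
        have : ({2^k, 2^k} : Multiset ℕ) = {2^k} + {2^k} := rfl
        rw [this]; abel
      have e2 : (Multiset.replicate (2^k - 1) 0 + Multiset.replicate (2^k - 1) 0 + R) + {2^(k+1), 0}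
          = {2^(k+1)} + Multiset.replicate (2^(k+1) - 1) 0 + R := by
        have h3 : ({2^(k+1), 0} : Multiset ℕ) = {2^(k+1)} + Multiset.replicate 1 0 := rfl
        have hk : 2^(k+1) = 2^k + 2^k := by rw [pow_succ]; omega
        have h5 : 2^(k+1) - 1 = 2^k - 1 + (2^k - 1) + 1 := by omega
        rw [h3, h5, Multiset.replicate_add, Multiset.replicate_add]
        abel
      rw [e1, ← e2]
      exact bstep_merge k _
    rw [h1]
    refine step1.trans ?_
    rw [h2]
    exact step2.tail step3

lemma bstep_inv {n : ℕ} {C : Multiset ℕ}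
    (h : Relation.ReflTransGen BStep (Multiset.replicate n (2^0)) C) :
    C.sum = n ∧ ∀ q ∈ C, q = 0 ∨ ∃ j, q = 2^j := by
  induction h with
  | refl =>
    constructor
    · simp [Multiset.sum_replicate]
    · intro q hq
      right; exact ⟨0, (Multiset.eq_of_mem_replicate hq)⟩
  | tail _ hstep ih =>
    rcases hstep with ⟨i, hle, rfl⟩ | rfl
    · obtain ⟨D, hD⟩ := exists_add_of_le hle
      rw [hD, add_tsub_cancel_left]
      constructor
      · have hsum : ({2^i, 2^i} : Multiset ℕ).sum = 2^(i+1) := by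
          simp [pow_succ]; ring
        have := ih.1
        rw [hD] at this
        simp only [Multiset.sum_add] at this ⊢
        simp [Multiset.insert_eq_cons] at this ⊢
        omega
      · intro q hq
        rw [Multiset.mem_add] at hq
        rcases hq with hq | hq
        · exact ih.2 q (by rw [hD]; exact Multiset.mem_add.2 (Or.inr hq))
        · simp [Multiset.insert_eq_cons] at hq
          rcases hq with rfl | rfl
          · right; exact ⟨i+1, rfl⟩
          · left; rfl
    · exact ih

/-- For `n ≥ 2` the coverable states are exactly `{0} ∪ {2^i : i ≤ ⌊log₂ n⌋}`,
so the state complexity is `⌊log₂ n⌋ + 2`. -/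
theorem binary_protocol_state_complexity (n : ℕ) (hn : 2 ≤ n) :
    Coverable n = {0} ∪ {q | ∃ i ≤ Nat.log 2 n, q = 2^i} ∧
    (Coverable n).ncard = Nat.log 2 n + 2 := by
  have hn0 : n ≠ 0 := by omega
  have hset : Coverable n = {0} ∪ {q | ∃ i ≤ Nat.log 2 n, q = 2^i} := by
    ext q
    constructor
    · rintro ⟨C, hreach, hq⟩
      obtain ⟨hsum, hpow⟩ := bstep_inv hreach
      rcases hpow q hq with rfl | ⟨j, rfl⟩
      · exact Or.inl rfl
      · right
        refine ⟨j, ?_, rfl⟩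
        have hle : 2^j ≤ C.sum :=
          Multiset.single_le_sum (fun x _ => Nat.zero_le x) _ hq
        rw [hsum] at hle
        exact (Nat.le_log_iff_pow_le one_lt_two hn0).2 hle
    · rintro (rfl | ⟨i, hi, rfl⟩)
      · -- 0 is coverable: merge two 1's (possible since n ≥ 2)
        have h2 : 2^1 ≤ n := by simpa using hn
        have hsplit : Multiset.replicate n (2^0)
            = Multiset.replicate (2^1) 1 + Multiset.replicate (n - 2^1) 1 := by
          rw [← Multiset.replicate_add]
          congr 1
          omega
        refine ⟨{2^1} + Multiset.replicate (2^1 - 1) 0 + Multiset.replicate (n - 2^1) 1,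
          by rw [hsplit]; exact reach_merge 1 _, ?_⟩
        refine Multiset.mem_add.2 (Or.inl (Multiset.mem_add.2 (Or.inr ?_)))
        simp [Multiset.mem_replicate]
      · have h2 : 2^i ≤ n :=
          le_trans (Nat.pow_le_pow_right (by norm_num) hi) (Nat.pow_log_le_self 2 hn0)
        have hsplit : Multiset.replicate n (2^0)
            = Multiset.replicate (2^i) 1 + Multiset.replicate (n - 2^i) 1 := by
          rw [← Multiset.replicate_add]
          congr 1
          omega
        refine ⟨{2^i} + Multiset.replicate (2^i - 1) 0 + Multiset.replicate (n - 2^i) 1,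
          by rw [hsplit]; exact reach_merge i _, ?_⟩
        refine Multiset.mem_add.2 (Or.inl (Multiset.mem_add.2 (Or.inl ?_)))
        simp
  refine ⟨hset, ?_⟩
  rw [hset]
  have himg : {q | ∃ i ≤ Nat.log 2 n, q = 2^i} = (fun i => 2^i) '' Set.Iic (Nat.log 2 n) := by
    ext q; simp [Set.mem_image, eq_comm]
  rw [himg]
  have hIic : Set.Iic (Nat.log 2 n) = ↑(Finset.Iic (Nat.log 2 n)) := by simp
  have hfin : ((fun i => 2^i) '' Set.Iic (Nat.log 2 n)).Finite := by
    rw [hIic]; exact (Finset.Iic _).finite_toSet.image _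
  have hinj : Function.Injective (fun i : ℕ => 2^i) :=
    Nat.pow_right_injective (le_refl 2)
  have h0 : (0:ℕ) ∉ (fun i => 2^i) '' Set.Iic (Nat.log 2 n) := by
    rintro ⟨i, -, hi⟩
    exact (Nat.pos_of_ne_zero (by positivity)).ne' hi
  rw [Set.union_comm, Set.union_singleton, Set.ncard_insert_of_notMem h0 hfin,
    Set.ncard_image_of_injective _ hinj, hIic, Set.ncard_coe_finset, Nat.card_Iic]
end

section
/- If s, t : ℕ → ℕ are the number of 1-bits such that n has binary representation b_{⌊log n⌋}...b₀, then the protocol invariant holds: starting from n agents each contributing value 2^0 = 1, any reachable configuration of the initialisation phase has Σ_i 2^i · (number of counter agents at level i with flag N set) = n; moreover the number of counter agents at each level eventually equals exactly 1 for levels 0 through ⌊log n⌋, with the N flag at level i equal to bit b_i of n. -/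
/-- Value of a counter configuration: `Σ 2^i` over agents `(i, 1)` (set bits). -/
def cval (C : Multiset (ℕ × ℕ)) : ℕ :=
  (C.map fun p => p.2 * 2 ^ p.1).sum

def Carry (C C' : Multiset (ℕ × ℕ)) : Prop :=
  ∃ i : ℕ, ({(i,1), (i,1)} : Multiset (ℕ × ℕ)) ≤ C ∧
    C' = C - {(i,1), (i,1)} + {(i+1,1), (i,0)}

def MergeT (C C' : Multiset (ℕ × ℕ)) : Prop :=
  ∃ (i a b : ℕ), a + b ≤ 1 ∧ ({(i,a), (i,b)} : Multiset (ℕ × ℕ)) ≤ C ∧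
    C' = C - {(i,a), (i,b)} + {(i, a+b)}

/-- Level `j` is occupied. -/
def occ (C : Multiset (ℕ × ℕ)) (j : ℕ) : Prop := ∃ p ∈ C, p.1 = j

/-- The protocol invariant. -/
def CInv (n : ℕ) (C : Multiset (ℕ × ℕ)) : Prop :=
  cval C = n ∧ (∀ p ∈ C, p.2 ≤ 1) ∧ (∀ j, occ C (j+1) → occ C j) ∧ occ C 0

lemma cval_add (s t : Multiset (ℕ × ℕ)) : cval (s + t) = cval s + cval t := by
  simp [cval]

lemma cval_sub_add {C D : Multiset (ℕ × ℕ)} (h : D ≤ C) :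
    cval (C - D) + cval D = cval C := by
  rw [← cval_add, tsub_add_cancel_of_le h]

lemma mset_mem_pair {α : Type*} {a b c : α} :
    a ∈ ({b, c} : Multiset α) ↔ a = b ∨ a = c := by
  rw [Multiset.insert_eq_cons, Multiset.mem_cons, Multiset.mem_singleton]

lemma mem_sub_of_level_ne {C D : Multiset (ℕ × ℕ)} {q : ℕ × ℕ}
    (hq : q ∈ C) (hD : ∀ r ∈ D, r.1 ≠ q.1) : q ∈ C - D := by
  rw [← Multiset.count_pos, Multiset.count_sub,
    Multiset.count_eq_zero.mpr (fun h => hD q h rfl)]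
  simpa [Multiset.count_pos] using hq

lemma cinv_init (n : ℕ) (hn : 1 ≤ n) :
    CInv n (Multiset.replicate n ((0 : ℕ), (1 : ℕ))) := by
  refine ⟨by simp [cval, Multiset.map_replicate], ?_, ?_, ?_⟩
  · intro p hp
    rw [Multiset.eq_of_mem_replicate hp]
  · rintro j ⟨p, hp, hpj⟩
    rw [Multiset.eq_of_mem_replicate hp] at hpj
    simp at hpj
  · exact ⟨(0,1), Multiset.mem_replicate.mpr ⟨by omega, rfl⟩, rfl⟩

lemma cinv_step {n : ℕ} {C C' : Multiset (ℕ × ℕ)} (hI : CInv n C)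
    (h : Carry C C' ∨ MergeT C C') : CInv n C' := by
  obtain ⟨hval, hflag, hclosed, h0⟩ := hI
  rcases h with ⟨i, hle, rfl⟩ | ⟨i, a, b, hab, hle, rfl⟩
  · -- Carry
    set D : Multiset (ℕ × ℕ) := {(i,1),(i,1)} with hD
    set E : Multiset (ℕ × ℕ) := {(i+1,1),(i,0)} with hE
    have hDlev : ∀ r ∈ D, r.1 = i := by
      intro r hr
      rcases mset_mem_pair.mp hr with rfl | rfl <;> rfl
    have hmem0 : ((i,0) : ℕ × ℕ) ∈ C - D + E := by
      simp [hE]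
    have hA : ∀ j, occ C j → occ (C - D + E) j := by
      rintro j ⟨p, hp, hpj⟩
      by_cases hji : j = i
      · exact ⟨(i,0), hmem0, hji.symm⟩
      · refine ⟨p, Multiset.mem_add.mpr (Or.inl ?_), hpj⟩
        exact mem_sub_of_level_ne hp (fun r hr => by rw [hDlev r hr, hpj]; omega)
    refine ⟨?_, ?_, ?_, hA 0 h0⟩
    · have h1 : cval (C - D) + cval D = cval C := cval_sub_add hle
      have h2 : cval (C - D + E) = cval (C - D) + cval E := cval_add _ _
      have hcd : cval D = 2 ^ i + 2 ^ i := by simp [hD, cval]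
      have hce : cval E = 2 ^ (i + 1) := by simp [hE, cval]
      have hp : (2 : ℕ) ^ (i + 1) = 2 ^ i + 2 ^ i := by rw [pow_succ]; ring
      omega
    · intro p hp
      rcases Multiset.mem_add.mp hp with hp | hp
      · exact hflag p (Multiset.mem_of_le tsub_le_self hp)
      · rcases mset_mem_pair.mp hp with rfl | rfl <;> simp
    · rintro j ⟨p, hp, hpj⟩
      rcases Multiset.mem_add.mp hp with hp | hp
      · exact hA j (hclosed j ⟨p, Multiset.mem_of_le tsub_le_self hp, hpj⟩)
      · rcases mset_mem_pair.mp hp with rfl | rfl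
        · simp only at hpj
          have hji : j = i := by omega
          exact ⟨(i,0), hmem0, hji.symm⟩
        · simp only at hpj
          have hCi : occ C (j+1) :=
            ⟨(i,1), Multiset.mem_of_le hle (mset_mem_pair.mpr (Or.inl rfl)), hpj⟩
          exact hA j (hclosed j hCi)
  · -- Merge
    set D : Multiset (ℕ × ℕ) := {(i,a),(i,b)} with hD
    set E : Multiset (ℕ × ℕ) := {(i,a+b)} with hE
    have hDlev : ∀ r ∈ D, r.1 = i := by
      intro r hr
      rcases mset_mem_pair.mp hr with rfl | rfl <;> rfl
    have hmem0 : ((i,a+b) : ℕ × ℕ) ∈ C - D + E :=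
      Multiset.mem_add.mpr (Or.inr (Multiset.mem_singleton_self _))
    have hA : ∀ j, occ C j → occ (C - D + E) j := by
      rintro j ⟨p, hp, hpj⟩
      by_cases hji : j = i
      · exact ⟨(i,a+b), hmem0, hji.symm⟩
      · refine ⟨p, Multiset.mem_add.mpr (Or.inl ?_), hpj⟩
        exact mem_sub_of_level_ne hp (fun r hr => by rw [hDlev r hr, hpj]; omega)
    refine ⟨?_, ?_, ?_, hA 0 h0⟩
    · have h1 : cval (C - D) + cval D = cval C := cval_sub_add hle
      have h2 : cval (C - D + E) = cval (C - D) + cval E := cval_add _ _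
      have hcd : cval D = a * 2 ^ i + b * 2 ^ i := by simp [hD, cval]
      have hce : cval E = (a + b) * 2 ^ i := by simp [hE, cval]
      have : (a + b) * 2 ^ i = a * 2 ^ i + b * 2 ^ i := by ring
      omega
    · intro p hp
      rcases Multiset.mem_add.mp hp with hp | hp
      · exact hflag p (Multiset.mem_of_le tsub_le_self hp)
      · rw [Multiset.mem_singleton.mp hp]; exact hab
    · rintro j ⟨p, hp, hpj⟩
      rcases Multiset.mem_add.mp hp with hp | hp
      · exact hA j (hclosed j ⟨p, Multiset.mem_of_le tsub_le_self hp, hpj⟩)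
      · rw [Multiset.mem_singleton.mp hp] at hpj
        have hCi : occ C (j+1) :=
          ⟨(i,a), Multiset.mem_of_le hle (mset_mem_pair.mpr (Or.inl rfl)), hpj⟩
        exact hA j (hclosed j hCi)

/-- In a terminal configuration there is at most one agent per level. -/
lemma terminal_le_one {C : Multiset (ℕ × ℕ)} (hflag : ∀ p ∈ C, p.2 ≤ 1)
    (hterm : ¬ ∃ C', Carry C C' ∨ MergeT C C') (i : ℕ) :
    Multiset.card (C.filter fun p => p.1 = i) ≤ 1 := by
  by_contra h
  push_neg at h
  set s := C.filter (fun p => p.1 = i) with hs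
  obtain ⟨p, hp⟩ : ∃ p, p ∈ s := Multiset.card_pos_iff_exists_mem.mp (by omega)
  obtain ⟨s', hs'⟩ := Multiset.exists_cons_of_mem hp
  have hcard' : 0 < Multiset.card s' := by
    rw [hs', Multiset.card_cons] at h
    omega
  obtain ⟨q, hq⟩ : ∃ q, q ∈ s' := Multiset.card_pos_iff_exists_mem.mp hcard'
  obtain ⟨s'', hs''⟩ := Multiset.exists_cons_of_mem hq
  have hpq : ({p, q} : Multiset (ℕ × ℕ)) ≤ C := by
    refine le_trans ?_ (Multiset.filter_le (fun p => p.1 = i) C)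
    rw [← hs, hs', hs'']
    exact Multiset.cons_le_cons p (Multiset.cons_le_cons q (Multiset.zero_le _))
  have hpC : p ∈ C := Multiset.mem_of_le hpq (mset_mem_pair.mpr (Or.inl rfl))
  have hqC : q ∈ C := Multiset.mem_of_le hpq (mset_mem_pair.mpr (Or.inr rfl))
  have hqs : q ∈ s := by rw [hs']; exact Multiset.mem_cons_of_mem hq
  have hpi : p.1 = i := (Multiset.mem_filter.mp hp).2
  have hqi : q.1 = i := (Multiset.mem_filter.mp hqs).2
  obtain ⟨pi, a⟩ := p
  obtain ⟨qi, b⟩ := q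
  simp only at hpi hqi
  rw [hpi, hqi] at hpq
  have ha : a ≤ 1 := hflag _ hpC
  have hb : b ≤ 1 := hflag _ hqC
  by_cases hab : a + b ≤ 1
  · exact hterm ⟨_, Or.inr ⟨i, a, b, hab, hpq, rfl⟩⟩
  · have ha1 : a = 1 := by omega
    have hb1 : b = 1 := by omega
    subst ha1; subst hb1
    exact hterm ⟨_, Or.inl ⟨i, hpq, rfl⟩⟩

lemma mem_bitIndices_iff (n : ℕ) : ∀ i : ℕ, i ∈ n.bitIndices ↔ n.testBit i = true := by
  induction n using Nat.binaryRec with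
  | zero => intro i; simp
  | bit b m ih =>
    intro i
    cases b
    · rw [Nat.bit_false, Nat.bitIndices_two_mul]
      cases i with
      | zero => simp [Nat.testBit_zero, Nat.mul_mod_right]
      | succ i =>
        rw [Nat.testBit_succ, (by omega : 2 * m / 2 = m), ← ih i]
        simp only [List.mem_map]
        constructor
        · rintro ⟨a, ha, hai⟩
          have : a = i := by omega
          subst this; exact ha
        · intro h; exact ⟨i, h, rfl⟩
    · rw [Nat.bit_true, Nat.bitIndices_two_mul_add_one]
      cases i with
      | zero =>
        have h1 : (2 * m + 1) % 2 = 1 := by omega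
        simp [Nat.testBit_zero, h1]
      | succ i =>
        rw [Nat.testBit_succ, (by omega : (2 * m + 1) / 2 = m), ← ih i]
        simp only [List.mem_cons, List.mem_map]
        constructor
        · rintro (h | ⟨a, ha, hai⟩)
          · omega
          · have : a = i := by omega
            subst this; exact ha
        · intro h; exact Or.inr ⟨i, h, rfl⟩

lemma testBit_log {n : ℕ} (hn : 1 ≤ n) : n.testBit (Nat.log 2 n) = true := by
  have h1 : 2 ^ Nat.log 2 n ≤ n := Nat.pow_log_le_self 2 (by omega)
  have h2 : n < 2 ^ (Nat.log 2 n + 1) := Nat.lt_pow_succ_log_self (by norm_num) n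
  rw [pow_succ] at h2
  have hdiv : n / 2 ^ Nat.log 2 n = 1 := Nat.div_eq_of_lt_le (by omega) (by omega)
  simp [Nat.testBit_eq_decide_div_mod_eq, hdiv]

/-- Starting from `n` agents `(0,1)`, every reachable configuration of the counter
subsystem has value `n`; moreover in any terminal reachable configuration, each
level `i ≤ ⌊log₂ n⌋` holds exactly one counter agent, whose N-flag equals bit `i`
of `n`. -/
theorem counter_initialisation (n : ℕ) (hn : 1 ≤ n) (C : Multiset (ℕ × ℕ))
    (hreach : Relation.ReflTransGen (fun C C' => Carry C C' ∨ MergeT C C')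
      (Multiset.replicate n ((0 : ℕ), (1 : ℕ))) C) :
    cval C = n ∧
    ((¬ ∃ C', Carry C C' ∨ MergeT C C') →
      ∀ i ≤ Nat.log 2 n,
        Multiset.card (C.filter fun p => p.1 = i) = 1 ∧
        ((i, 1) ∈ C ↔ n.testBit i)) := by
  have hInv : CInv n C := by
    induction hreach with
    | refl => exact cinv_init n hn
    | tail _ hstep ih => exact cinv_step ih hstep
  obtain ⟨hval, hflag, hclosed, h0⟩ := hInv
  refine ⟨hval, fun hterm i hi => ?_⟩
  have hle1 := terminal_le_one hflag hterm
  -- no two agents at the same level, so `C` has no duplicates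
  have hnodup : C.Nodup := by
    rw [Multiset.nodup_iff_count_le_one]
    intro p
    calc Multiset.count p C
        = Multiset.count p (C.filter fun q => q.1 = p.1) :=
          (Multiset.count_filter_of_pos (p := fun (q : ℕ × ℕ) => q.1 = p.1) rfl).symm
      _ ≤ Multiset.card (C.filter fun q => q.1 = p.1) := Multiset.count_le_card _ _
      _ ≤ 1 := hle1 p.1
  set F : Finset (ℕ × ℕ) := ⟨C, hnodup⟩ with hF
  have hmemF : ∀ p : ℕ × ℕ, p ∈ F ↔ p ∈ C := fun p => Iff.rfl
  set T : Finset ℕ := (F.filter fun p => p.2 = 1).image Prod.fst with hT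
  have hsumT : ∑ j ∈ T, 2 ^ j = n := by
    rw [hT, Finset.sum_image ?inj]
    case inj =>
      intro x hx y hy hxy
      have hx2 := (Finset.mem_filter.mp hx).2
      have hy2 := (Finset.mem_filter.mp hy).2
      exact Prod.ext hxy (hx2.trans hy2.symm)
    have : ∑ p ∈ F.filter (fun p => p.2 = 1), 2 ^ p.1
        = ∑ p ∈ F, p.2 * 2 ^ p.1 := by
      rw [Finset.sum_filter]
      refine Finset.sum_congr rfl (fun p hp => ?_)
      have := hflag p ((hmemF p).mp hp)
      interval_cases h : p.2 <;> simp
    rw [this]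
    exact hval
  have hmemT : ∀ j : ℕ, j ∈ T ↔ (j, 1) ∈ C := by
    intro j
    constructor
    · intro hj
      obtain ⟨p, hp, hp1⟩ := Finset.mem_image.mp hj
      have hp2 := (Finset.mem_filter.mp hp).2
      have hpF := (Finset.mem_filter.mp hp).1
      have : p = (j, 1) := Prod.ext hp1 hp2
      rw [← this]; exact (hmemF p).mp hpF
    · intro hj
      exact Finset.mem_image.mpr ⟨(j,1), Finset.mem_filter.mpr ⟨(hmemF _).mpr hj, rfl⟩, rfl⟩
  have hbit : ∀ j : ℕ, n.testBit j = true ↔ j ∈ T := by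
    intro j
    have h := Finset.toFinset_bitIndices_twoPowSum T
    rw [hsumT] at h
    rw [← h, List.mem_toFinset, mem_bitIndices_iff]
  -- occupancy of all levels up to the top bit
  have htopC : ((Nat.log 2 n, 1) : ℕ × ℕ) ∈ C :=
    (hmemT _).mp ((hbit _).mp (testBit_log hn))
  have hocc_down : ∀ d j : ℕ, occ C (j + d) → occ C j := by
    intro d
    induction d with
    | zero => intro j h; exact h
    | succ d ih =>
      intro j h
      have h' : occ C (j + d + 1) := by
        have e : j + d + 1 = j + (d + 1) := by omega
        rwa [e]
      exact ih j (hclosed (j + d) h')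
  have hocc : occ C i := by
    have : occ C (i + (Nat.log 2 n - i)) := by
      rw [Nat.add_sub_cancel' hi]
      exact ⟨_, htopC, rfl⟩
    exact hocc_down _ i this
  obtain ⟨p, hp, hpi⟩ := hocc
  have hcard1 : 0 < Multiset.card (C.filter fun q => q.1 = i) :=
    Multiset.card_pos_iff_exists_mem.mpr ⟨p, Multiset.mem_filter.mpr ⟨hp, hpi⟩⟩
  refine ⟨by have := hle1 i; omega, ?_⟩
  exact (hmemT i).symm.trans (hbit i).symm
end
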